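/- arXiv:2005.10319 — 4 statements merged into one kernel-verified Lean document; each statement's English description precedes it below -/
import Mathlib

section
/- Let T be a tree, k ≥ 2 an integer, v ∈ V(T), and S a k-element subset of V(T) containing v. Let T_v be the (unique) S-Steiner tree in T, and let P be a path in T with at least one edge such that V(P) ∩ V(T_v) = {x}, where x is an endpoint of P. If either (1) x ∈ S and x ≠ v, or (2) x ∉ S and T_v has an internal vertex (a vertex of degree ≥ 2 in T_v) that belongs to S and differs from v, then there exists a k-element set S′ ≠ S with v ∈ S′ ⊆ V(T) such that the number of edges of the S′-Steiner tree is strictly larger than the number of edges of T_v. -/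
open SimpleGraph

/-- The Steiner distance of a set `S` of vertices of `G`: the minimum number of edges of a
connected subgraph of `G` whose vertex set contains `S`. -/
noncomputable def steinerDist {V : Type} [Fintype V] (G : SimpleGraph V) (S : Set V) : ℕ :=
  sInf {n | ∃ H : G.Subgraph, H.Connected ∧ S ⊆ H.verts ∧ H.edgeSet.ncard = n}

/-- The Steiner `k`-eccentricity of a vertex `v` of `G`. -/
noncomputable def steinerEcc {V : Type} [Fintype V] (G : SimpleGraph V) (k : ℕ) (v : V) : ℕ :=
  sSup {d | ∃ S : Finset V, v ∈ S ∧ S.card = k ∧ steinerDist G ↑S = d}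

/-- A leaf (pendent vertex) of a graph: a vertex of degree 1. -/
def IsLeaf {V : Type} (G : SimpleGraph V) (u : V) : Prop :=
  (G.neighborSet u).ncard = 1

/-- The number of leaves of a graph. -/
noncomputable def numLeaves {V : Type} [Fintype V] (G : SimpleGraph V) : ℕ :=
  {u : V | IsLeaf G u}.ncard

/-!
In a tree every connected subgraph contains the path between any two of its vertices and has
exactly one vertex more than it has edges. Hence a minimum Steiner tree `T_v` of `S` is the union
of the paths from `v` to the vertices of `S`, and it lies inside every connected subgraph
containing `S`.

Let `x₁` be the neighbour of `x` on `P`; it lies outside `T_v`. Replace a suitable `s ∈ S \ {v}`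
by `x₁`: if `s` lies on a path between two vertices of the new set `S'`, every connected subgraph
containing `S'` contains `S`, hence `T_v`, and also `x₁`, so it has more vertices, and thus more
edges, than `T_v`. In case (1) take `s = x`, which lies on the path from `v` to `x₁`. In case (2)
take `s = t`: of two neighbours of `t` in `T_v` at most one lies on the path from `v` to `t`, so
the path from `v` to the other one passes through `t`, and it extends to a path from `v` to some
`a ∈ S`, `a ≠ t`.
-/

namespace SimpleGraph

variable {V : Type} {G : SimpleGraph V}

lemma Subgraph.mem_verts_finset_sup {ι : Type*} {s : Finset ι} {H : ι → G.Subgraph} {u : V} :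
    u ∈ (s.sup H).verts ↔ ∃ i ∈ s, u ∈ (H i).verts := by
  simp [Finset.sup_eq_iSup]

lemma Subgraph.connected_finset_sup {ι : Type*} {s : Finset ι} {H : ι → G.Subgraph} {v : V}
    (hs : s.Nonempty) (hH : ∀ i ∈ s, (H i).Connected) (hv : ∀ i ∈ s, v ∈ (H i).verts) :
    (s.sup H).Connected := by
  induction hs using Finset.Nonempty.cons_induction with
  | singleton i => simpa using hH i (Finset.mem_singleton_self i)
  | cons i s hi hs ih =>
    rw [Finset.sup_cons]
    refine connected_sup (hH i (by simp)).preconnected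
      (ih (fun j hj => hH j (by simp [hj])) (fun j hj => hv j (by simp [hj]))).preconnected
      ⟨v, ?_⟩
    obtain ⟨j, hj⟩ := hs
    exact ⟨hv i (by simp), mem_verts_finset_sup.2 ⟨j, hj, hv j (by simp [hj])⟩⟩

lemma IsAcyclic.ncard_edgeSet_add_one [Finite V] (hG : G.IsAcyclic) {H : G.Subgraph}
    (hH : H.Connected) : H.edgeSet.ncard + 1 = H.verts.ncard := by
  have hcard := (isTree_iff_connected_and_card.1 ⟨hH.coe, hG.subgraph H⟩).2
  rwa [← H.image_coe_edgeSet_coe, Set.ncard_image_of_injective _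
    (Sym2.map.injective Subtype.val_injective), ← Nat.card_coe_set_eq, ← Nat.card_coe_set_eq]

lemma IsAcyclic.mem_verts_of_mem_support (hG : G.IsAcyclic) {H : G.Subgraph}
    (hH : H.Connected) {a b : V} (ha : a ∈ H.verts) (hb : b ∈ H.verts) {p : G.Walk a b}
    (hp : p.IsPath) {y : V} (hy : y ∈ p.support) : y ∈ H.verts := by
  classical
  obtain ⟨q, hq⟩ := ((Subgraph.connected_iff_forall_exists_walk_subgraph H).1 hH).2 ha hb
  obtain rfl : p = q.bypass := congrArg Subtype.val
    ((hG.subsingleton_path a b).elim ⟨p, hp⟩ ⟨q.bypass, q.bypass_isPath⟩)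
  exact hq.1 (q.mem_verts_toSubgraph.2 (q.support_bypass_subset_support hy))

lemma IsAcyclic.mem_support_or_mem_support (hG : G.IsAcyclic) {v t n₁ n₂ : V}
    (h₁ : G.Adj n₁ t) (h₂ : G.Adj n₂ t) (hn : n₁ ≠ n₂) {q₁ : G.Walk v n₁} {q₂ : G.Walk v n₂}
    (hq₁ : q₁.IsPath) (hq₂ : q₂.IsPath) : t ∈ q₁.support ∨ t ∈ q₂.support := by
  by_contra! h
  have hconcat := congrArg Subtype.val
    ((hG.subsingleton_path v t).elim ⟨_, hq₁.concat h.1 h₁⟩ ⟨_, hq₂.concat h.2 h₂⟩)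
  exact hn (Walk.concat_inj hconcat).1

lemma IsTree.exists_isPath_mem_support_of_adj (hG : G.IsTree) {T : G.Subgraph}
    (hT : T.Connected) {v x y : V} (hv : v ∈ T.verts) (hx : x ∈ T.verts) (hy : y ∉ T.verts)
    (h : G.Adj x y) : ∃ p : G.Walk v y, p.IsPath ∧ x ∈ p.support := by
  obtain ⟨q, hq, -⟩ := hG.existsUnique_path v x
  refine ⟨q.concat h, hq.concat (fun hyq => hy ?_) h, by simp [Walk.support_concat]⟩
  exact hG.isAcyclic.mem_verts_of_mem_support hT hv hx hq hyq

end SimpleGraph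

variable {V : Type} [Fintype V] {G : SimpleGraph V}

structure IsSteinerTree (G : SimpleGraph V) (S : Set V) (T : G.Subgraph) : Prop where
  connected : T.Connected
  subset : S ⊆ T.verts
  ncard_edgeSet : T.edgeSet.ncard = steinerDist G S

lemma steinerDist_le {S : Set V} {H : G.Subgraph} (hH : H.Connected) (hS : S ⊆ H.verts) :
    steinerDist G S ≤ H.edgeSet.ncard :=
  Nat.sInf_le ⟨H, hH, hS, rfl⟩

lemma exists_isSteinerTree (hG : G.Connected) (S : Set V) : ∃ T, IsSteinerTree G S T := by
  have hne :
      {n | ∃ H : G.Subgraph, H.Connected ∧ S ⊆ H.verts ∧ H.edgeSet.ncard = n}.Nonempty :=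
    ⟨_, toSubgraph G le_rfl, hG.toSubgraph le_rfl, fun _ _ => trivial, rfl⟩
  obtain ⟨T, hT, hST, hTe⟩ := Nat.sInf_mem hne
  exact ⟨T, hT, hST, hTe⟩

namespace IsSteinerTree

variable {S : Finset V} {T : G.Subgraph}

/-- The union of the paths `p a` is a connected subgraph of `T` containing `S`, so by minimality
it is all of `T`. -/
lemma exists_mem_support (hG : G.IsAcyclic) (hT : IsSteinerTree G ↑S T) {v : V} (hv : v ∈ S)
    (p : ∀ a, G.Walk v a) (hp : ∀ a, (p a).IsPath) {u : V} (hu : u ∈ T.verts) :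
    ∃ a ∈ S, u ∈ (p a).support := by
  set H := S.sup fun a => (p a).toSubgraph
  have hmem (w : V) : w ∈ H.verts ↔ ∃ a ∈ S, w ∈ (p a).support := by
    simp only [H, Subgraph.mem_verts_finset_sup, Walk.mem_verts_toSubgraph]
  have hH : H.Connected := Subgraph.connected_finset_sup ⟨v, hv⟩
    (fun a _ => (p a).toSubgraph_connected) (fun a _ => (p a).start_mem_verts_toSubgraph)
  have hHT : H.verts ⊆ T.verts := fun w hw => by
    obtain ⟨a, ha, hw⟩ := (hmem w).1 hw
    exact hG.mem_verts_of_mem_support hT.connected (hT.subset hv) (hT.subset ha) (hp a) hw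
  have hSH : ↑S ⊆ H.verts := fun a ha => (hmem a).2 ⟨a, ha, (p a).end_mem_support⟩
  have hTH : T.verts.ncard ≤ H.verts.ncard := by
    rw [← hG.ncard_edgeSet_add_one hT.connected, ← hG.ncard_edgeSet_add_one hH,
      hT.ncard_edgeSet]
    exact Nat.add_le_add_right (steinerDist_le hH hSH) 1
  exact (hmem u).1 (Set.eq_of_subset_of_ncard_le hHT hTH (Set.toFinite _) ▸ hu)

lemma verts_subset (hG : G.IsTree) (hT : IsSteinerTree G ↑S T) (hS : S.Nonempty)
    {H : G.Subgraph} (hH : H.Connected) (hSH : ↑S ⊆ H.verts) : T.verts ⊆ H.verts := by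
  obtain ⟨v, hv⟩ := hS
  choose p hp _ using hG.existsUnique_path v
  intro u hu
  obtain ⟨a, ha, hua⟩ := hT.exists_mem_support hG.isAcyclic hv p hp hu
  exact hG.isAcyclic.mem_verts_of_mem_support hH (hSH hv) (hSH ha) (hp a) hua

lemma steinerDist_lt (hG : G.IsTree) (hT : IsSteinerTree G ↑S T) (hS : S.Nonempty)
    {S' : Set V} {y : V} (hy : y ∈ S') (hyT : y ∉ T.verts)
    (hSS' : ∀ H : G.Subgraph, H.Connected → S' ⊆ H.verts → ↑S ⊆ H.verts) :
    steinerDist G ↑S < steinerDist G S' := by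
  obtain ⟨K, hK⟩ := exists_isSteinerTree hG.connected S'
  have hTK : T.verts ⊂ K.verts :=
    (hT.verts_subset hG hS hK.connected (hSS' K hK.connected hK.subset)).ssubset_of_ne
      fun h => hyT (h ▸ hK.subset hy)
  have hTK' := Set.ncard_lt_ncard hTK (Set.toFinite _)
  rw [← hG.isAcyclic.ncard_edgeSet_add_one hT.connected,
    ← hG.isAcyclic.ncard_edgeSet_add_one hK.connected] at hTK'
  rw [← hT.ncard_edgeSet, ← hK.ncard_edgeSet]
  exact Nat.lt_of_add_lt_add_right hTK'

lemma steinerDist_lt_insert_erase [DecidableEq V] (hG : G.IsTree) (hT : IsSteinerTree G ↑S T)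
    {s y : V} (hs : s ∈ S) (hyT : y ∉ T.verts) {a b : V} (ha : a ∈ insert y (S.erase s))
    (hb : b ∈ insert y (S.erase s)) {p : G.Walk a b} (hp : p.IsPath) (hsp : s ∈ p.support) :
    steinerDist G ↑S < steinerDist G ↑(insert y (S.erase s)) := by
  refine hT.steinerDist_lt hG ⟨s, hs⟩ (Finset.mem_insert_self y _) hyT fun H hH hSH c hc => ?_
  by_cases hcs : c = s
  · subst hcs
    exact hG.isAcyclic.mem_verts_of_mem_support hH (hSH ha) (hSH hb) hp hsp
  · exact hSH (Finset.mem_insert_of_mem (Finset.mem_erase.2 ⟨hcs, hc⟩))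

lemma exists_isPath_mem_support (hG : G.IsTree) (hT : IsSteinerTree G ↑S T) {v t : V}
    (hv : v ∈ S) (ht : 2 ≤ (T.neighborSet t).ncard) :
    ∃ a ∈ S, a ≠ t ∧ ∃ p : G.Walk v a, p.IsPath ∧ t ∈ p.support := by
  classical
  choose p hp hpu using hG.existsUnique_path v
  obtain ⟨n₁, hn₁, n₂, hn₂, hn⟩ := (Set.one_lt_ncard (Set.toFinite _)).1 ht
  obtain ⟨n, hnT, htn⟩ : ∃ n, T.Adj t n ∧ t ∈ (p n).support := by
    rcases hG.isAcyclic.mem_support_or_mem_support hn₁.adj_sub.symm hn₂.adj_sub.symm hn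
      (hp n₁) (hp n₂) with h | h
    exacts [⟨n₁, hn₁, h⟩, ⟨n₂, hn₂, h⟩]
  obtain ⟨a, ha, hna⟩ := hT.exists_mem_support hG.isAcyclic hv p hp hnT.snd_mem
  have htake : (p a).takeUntil n hna = p n := hpu n _ ((hp a).takeUntil hna)
  refine ⟨a, ha, ?_, p a, hp a, (p a).support_takeUntil_subset_support hna (htake ▸ htn)⟩
  rintro rfl
  exact Walk.endpoint_notMem_support_takeUntil (hp a) hna hnT.ne (htake ▸ htn)

end IsSteinerTree

theorem steiner_distance_growing_general {V : Type} [Fintype V]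
    (G : SimpleGraph V) (hT : G.IsTree) (k : ℕ)
    (v : V) (S : Finset V) (hvS : v ∈ S) (hcard : S.card = k)
    (Tv : G.Subgraph) (hTvc : Tv.Connected) (hTvs : ↑S ⊆ Tv.verts)
    (hTve : Tv.edgeSet.ncard = steinerDist G ↑S)
    (x b : V) (P : G.Walk x b) (hPlen : 1 ≤ P.length)
    (hmeet : {y | y ∈ P.support} ∩ Tv.verts = {x})
    (hcase : (x ∈ S ∧ x ≠ v) ∨
      (x ∉ S ∧ ∃ t ∈ S, t ≠ v ∧ 2 ≤ (Tv.neighborSet t).ncard)) :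
    ∃ S' : Finset V, S' ≠ S ∧ v ∈ S' ∧ S'.card = k ∧
      steinerDist G ↑S < steinerDist G ↑S' := by
  classical
  have hTv : IsSteinerTree G ↑S Tv := ⟨hTvc, hTvs, hTve⟩
  obtain ⟨x₁, hadj, hx₁P⟩ : ∃ y, G.Adj x y ∧ y ∈ P.support :=
    ⟨P.getVert 1, by simpa using P.adj_getVert_succ (i := 0) hPlen, P.getVert_mem_support 1⟩
  have hxT : x ∈ Tv.verts := (hmeet.ge (Set.mem_singleton x)).2
  have hx₁T : x₁ ∉ Tv.verts := fun h => hadj.ne' (hmeet.le ⟨hx₁P, h⟩)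
  obtain ⟨s, hsS, hsv, a, ha, p, hp, hsp⟩ : ∃ s ∈ S, s ≠ v ∧
      ∃ a ∈ insert x₁ (S.erase s), ∃ p : G.Walk v a, p.IsPath ∧ s ∈ p.support := by
    rcases hcase with ⟨hxS, hxv⟩ | ⟨-, t, htS, htv, ht⟩
    · obtain ⟨p, hp, hxp⟩ :=
        hT.exists_isPath_mem_support_of_adj hTvc (hTvs hvS) hxT hx₁T hadj
      exact ⟨x, hxS, hxv, x₁, Finset.mem_insert_self _ _, p, hp, hxp⟩
    · obtain ⟨a, haS, hat, p, hp, htp⟩ := hTv.exists_isPath_mem_support hT hvS ht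
      exact ⟨t, htS, htv, a, Finset.mem_insert_of_mem (Finset.mem_erase.2 ⟨hat, haS⟩),
        p, hp, htp⟩
  have hvS' : v ∈ insert x₁ (S.erase s) :=
    Finset.mem_insert_of_mem (Finset.mem_erase.2 ⟨hsv.symm, hvS⟩)
  have hx₁S : x₁ ∉ S := fun h => hx₁T (hTvs h)
  refine ⟨insert x₁ (S.erase s), fun h => hx₁S (h ▸ Finset.mem_insert_self _ _), hvS', ?_,
    hTv.steinerDist_lt_insert_erase hT hsS hx₁T hvS' ha hp hsp⟩
  rw [Finset.card_insert_of_notMem (fun h => hx₁S (Finset.mem_of_mem_erase h)),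
    Finset.card_erase_add_one hsS, hcard]

/-- Lemma 2.3: let `T` be a tree, `S` a `k`-set containing `v`, `T_v` the `S`-Steiner tree,
and `P` a path (with at least one edge) meeting `T_v` exactly in its endpoint `x`. If either
(1) `x ∈ S` and `x ≠ v`, or (2) `x ∉ S` and `T_v` has an internal vertex belonging to
`S \ {v}`, then there is a `k`-set `S' ≠ S` containing `v` whose Steiner tree is strictly
larger than `T_v`. -/
theorem steiner_distance_growing {V : Type} [Fintype V] [DecidableEq V]
    (G : SimpleGraph V) (hT : G.IsTree) (k : ℕ) (hk : 2 ≤ k)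
    (v : V) (S : Finset V) (hvS : v ∈ S) (hcard : S.card = k)
    (Tv : G.Subgraph) (hTvc : Tv.Connected) (hTvs : ↑S ⊆ Tv.verts)
    (hTve : Tv.edgeSet.ncard = steinerDist G ↑S)
    (x b : V) (P : G.Walk x b) (hP : P.IsPath) (hPlen : 1 ≤ P.length)
    (hmeet : {y | y ∈ P.support} ∩ Tv.verts = {x})
    (hcase : (x ∈ S ∧ x ≠ v) ∨
      (x ∉ S ∧ ∃ t ∈ S, t ≠ v ∧ 2 ≤ (Tv.neighborSet t).ncard)) :
    ∃ S' : Finset V, S' ≠ S ∧ v ∈ S' ∧ S'.card = k ∧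
      steinerDist G ↑S < steinerDist G ↑S' :=
  steiner_distance_growing_general G hT k v S hvS hcard Tv hTvc hTvs hTve x b P hPlen hmeet hcase
end

section
/- Let T be a tree, v ∈ V(T), and k ≥ 2 an integer. If k > ℓ(T), then every Steiner k-ecc v-set contains all the leaves of T. The same conclusion holds if v is a leaf of T and k = ℓ(T). -/
open SimpleGraph

/-! In a tree, for `v ∈ S` the Steiner distance of `S` is one less than the number of vertices
of the union of the paths from `v` to the elements of `S`. If a leaf `u` were missing from a
Steiner `k`-ecc `v`-set `S`, counting leaves yields a non-leaf `w ≠ v` in `S`, and exchanging `w`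
for a vertex outside `S` strictly enlarges that union, contradicting maximality. If `w` lies on
the path to another element of `S`, exchange it for `u`, which is not on any of the paths since
inner vertices of a path have two neighbours; otherwise exchange it for a neighbour of `w` off
the path from `v` to `w`, which exists because `w` is not a leaf. -/

section Leaves

variable {V : Type} {G : SimpleGraph V} {u : V}

theorem IsLeaf.eq_of_adj (hu : IsLeaf G u) {x y : V} (hx : G.Adj u x) (hy : G.Adj u y) :
    x = y := by
  obtain ⟨t, ht⟩ := Set.ncard_eq_one.mp hu
  have hx' : x ∈ G.neighborSet u := hx
  have hy' : y ∈ G.neighborSet u := hy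
  rw [ht] at hx' hy'
  exact hx'.trans hy'.symm

theorem isLeaf_of_forall_adj_eq {y : V} (hy : G.Adj u y) (h : ∀ z, G.Adj u z → z = y) :
    IsLeaf G u := by
  have hN : G.neighborSet u = {y} := Set.eq_singleton_iff_unique_mem.mpr ⟨hy, h⟩
  rw [IsLeaf, hN, Set.ncard_singleton]

theorem SimpleGraph.Walk.IsPath.not_isLeaf_of_mem_support {a b : V} {p : G.Walk a b}
    (hp : p.IsPath) (hu : u ∈ p.support) (hua : u ≠ a) (hub : u ≠ b) : ¬IsLeaf G u := by
  intro hleaf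
  obtain ⟨i, rfl, hi⟩ := Walk.mem_support_iff_exists_getVert.mp hu
  have hi0 : i ≠ 0 := by rintro rfl; exact hua p.getVert_zero
  have hil : i ≠ p.length := by rintro rfl; exact hub p.getVert_length
  have hprev := p.adj_getVert_succ (i := i - 1) (by omega)
  rw [Nat.sub_add_cancel (by omega)] at hprev
  have hnext := p.adj_getVert_succ (i := i) (by omega)
  have := hp.getVert_injOn (by simp; omega) (by simp; omega) (hleaf.eq_of_adj hprev.symm hnext)
  omega

end Leaves

theorem SimpleGraph.IsAcyclic.ncard_edgeSet_add_one_s7 {V : Type} [Finite V] {G : SimpleGraph V}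
    (hG : G.IsAcyclic) {H : G.Subgraph} (hH : H.Connected) :
    H.edgeSet.ncard + 1 = H.verts.ncard := by
  classical
  have := Fintype.ofFinite V
  have hcount := (IsTree.mk hH.coe (hG.subgraph H)).card_edgeFinset
  rwa [edgeFinset_card, ← Set.toFinset_card, ← Set.ncard_eq_toFinset_card',
    ← Set.ncard_image_of_injective _ (Sym2.map.injective Subtype.val_injective),
    Subgraph.image_coe_edgeSet_coe, ← Nat.card_eq_fintype_card, Nat.card_coe_set_eq] at hcount

theorem steinerDist_le_steinerEcc {V : Type} [Fintype V] (G : SimpleGraph V) {k : ℕ} {v : V}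
    {S : Finset V} (hv : v ∈ S) (hk : S.card = k) : steinerDist G S ≤ steinerEcc G k v :=
  le_csSup ((Set.finite_range fun S : Finset V => steinerDist G S).subset
    (by rintro _ ⟨S, -, -, rfl⟩; exact ⟨S, rfl⟩)).bddAbove ⟨S, hv, hk, rfl⟩

theorem Finset.exists_mem_ne_notMem_of_card {α : Type*} [DecidableEq α] {S L : Finset α}
    {u v : α} (hv : v ∈ S) (hu : u ∈ L) (huS : u ∉ S)
    (h : L.card < S.card ∨ v ∈ L ∧ S.card = L.card) : ∃ w ∈ S, w ≠ v ∧ w ∉ L := by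
  by_contra! hcon
  have hsub : S ⊆ insert v (L.erase u) := fun w hw => by
    rcases eq_or_ne w v with rfl | hwv
    · exact mem_insert_self _ _
    · exact mem_insert_of_mem (mem_erase.2 ⟨fun (h : w = u) => huS (h ▸ hw), hcon w hw hwv⟩)
  have hL := card_erase_of_mem hu
  have hpos := card_pos.2 ⟨u, hu⟩
  rcases h with hlt | ⟨hvL, heq⟩
  · have := (card_le_card hsub).trans (card_insert_le _ _)
    omega
  · rw [insert_eq_of_mem (mem_erase.2 ⟨fun (h : v = u) => huS (h ▸ hv), hvL⟩)] at hsub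
    have := card_le_card hsub
    omega

namespace SimpleGraph.IsTree

variable {V : Type} {G : SimpleGraph V} (hT : G.IsTree)

noncomputable def path (a b : V) : G.Walk a b :=
  (hT.existsUnique_path a b).exists.choose

theorem isPath_path (a b : V) : (hT.path a b).IsPath :=
  (hT.existsUnique_path a b).exists.choose_spec

theorem eq_path {a b : V} {p : G.Walk a b} (hp : p.IsPath) : p = hT.path a b :=
  (hT.existsUnique_path a b).unique hp (hT.isPath_path a b)

theorem support_path_subset {v a w : V} (hw : w ∈ (hT.path v a).support) :
    (hT.path v w).support ⊆ (hT.path v a).support := by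
  classical
  rw [← hT.eq_path ((hT.isPath_path v a).takeUntil hw)]
  exact Walk.support_takeUntil_subset_support _ hw

theorem support_path_subset_verts {H : G.Subgraph} (hH : H.Connected) {a b : V}
    (ha : a ∈ H.verts) (hb : b ∈ H.verts) : ∀ x ∈ (hT.path a b).support, x ∈ H.verts := by
  classical
  obtain ⟨q⟩ := hH ⟨a, ha⟩ ⟨b, hb⟩
  have hq : (q.map H.hom).bypass = hT.path a b := hT.eq_path (q.map H.hom).bypass_isPath
  intro x hx
  rw [← hq] at hx
  have hx' := (q.map H.hom).support_bypass_subset_support hx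
  rw [Walk.support_map, List.mem_map] at hx'
  obtain ⟨y, -, rfl⟩ := hx'
  exact y.2

theorem exists_adj_notMem_support_path {v w : V} (hwv : w ≠ v) (hw : ¬IsLeaf G w) :
    ∃ b, G.Adj w b ∧ b ∉ (hT.path v w).support := by
  by_contra! h
  have hnil : ¬(hT.path v w).Nil := Walk.not_nil_of_ne hwv.symm
  exact hw (isLeaf_of_forall_adj_eq (Walk.adj_penultimate hnil).symm fun z hz =>
    hT.isAcyclic.eq_penultimate_of_adj_end (hT.isPath_path v w) hz (h z hz))

def steinerVerts (v : V) (A : Finset V) : Set V :=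
  {x | ∃ a ∈ A, x ∈ (hT.path v a).support}

variable {v : V} {A : Finset V}

theorem subset_steinerVerts : ↑A ⊆ hT.steinerVerts v A :=
  fun a ha => ⟨a, ha, Walk.end_mem_support _⟩

theorem steinerVerts_mono {B : Finset V} (h : A ⊆ B) :
    hT.steinerVerts v A ⊆ hT.steinerVerts v B :=
  fun _ ⟨a, ha, hx⟩ => ⟨a, h ha, hx⟩

theorem support_path_subset_steinerVerts {x : V} (hx : x ∈ hT.steinerVerts v A) :
    ∀ y ∈ (hT.path v x).support, y ∈ hT.steinerVerts v A := by
  obtain ⟨a, ha, hxa⟩ := hx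
  exact fun y hy => ⟨a, ha, hT.support_path_subset hxa hy⟩

theorem steinerVerts_insert_of_mem [DecidableEq V] {w : V} (hw : w ∈ hT.steinerVerts v A) :
    hT.steinerVerts v (insert w A) = hT.steinerVerts v A := by
  refine (Set.Subset.antisymm ?_ (hT.steinerVerts_mono (Finset.subset_insert _ _)))
  rintro x ⟨a, ha, hx⟩
  rcases Finset.mem_insert.1 ha with rfl | ha
  · exact hT.support_path_subset_steinerVerts hw _ hx
  · exact ⟨a, ha, hx⟩

theorem notMem_steinerVerts {u : V} (hu : IsLeaf G u) (huv : u ≠ v) (huA : u ∉ A) :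
    u ∉ hT.steinerVerts v A := by
  rintro ⟨a, ha, hua⟩
  exact (hT.isPath_path v a).not_isLeaf_of_mem_support hua huv (by rintro rfl; exact huA ha) hu

theorem connected_induce_steinerVerts (hv : v ∈ A) :
    ((⊤ : G.Subgraph).induce (hT.steinerVerts v A)).Connected := by
  rw [Subgraph.connected_iff_forall_exists_walk_subgraph]
  refine ⟨⟨v, hT.subset_steinerVerts hv⟩, fun {x y} hx hy =>
    ⟨(hT.path v x).reverse.append (hT.path v y), ?_⟩⟩
  refine (Walk.toSubgraph_le_induce_support _).trans (Subgraph.induce_mono_right ?_)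
  intro z hz
  rw [Set.mem_ofPred_eq, Walk.mem_support_append_iff, Walk.support_reverse, List.mem_reverse] at hz
  exact hz.elim (hT.support_path_subset_steinerVerts hx z)
    (hT.support_path_subset_steinerVerts hy z)

theorem steinerDist_add_one [Fintype V] (hv : v ∈ A) :
    steinerDist G A + 1 = (hT.steinerVerts v A).ncard := by
  have hH₀ := hT.connected_induce_steinerVerts hv
  have hleast :
      IsLeast {n | ∃ H : G.Subgraph, H.Connected ∧ ↑A ⊆ H.verts ∧ H.edgeSet.ncard = n}
        ((⊤ : G.Subgraph).induce (hT.steinerVerts v A)).edgeSet.ncard := by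
    refine ⟨⟨_, hH₀, hT.subset_steinerVerts, rfl⟩, ?_⟩
    rintro _ ⟨H, hH, hAH, rfl⟩
    have hsub : hT.steinerVerts v A ⊆ H.verts := by
      rintro x ⟨a, ha, hx⟩
      exact hT.support_path_subset_verts hH (hAH hv) (hAH ha) x hx
    have hle := Set.ncard_le_ncard hsub
    have h₀ := hT.isAcyclic.ncard_edgeSet_add_one_s7 hH₀
    have h := hT.isAcyclic.ncard_edgeSet_add_one_s7 hH
    rw [Subgraph.induce_verts] at h₀
    omega
  rw [steinerDist, hleast.csInf_eq]
  exact hT.isAcyclic.ncard_edgeSet_add_one_s7 hH₀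

theorem steinerDist_lt_steinerDist [Fintype V] {B : Finset V} (hA : v ∈ A) (hB : v ∈ B)
    (h : hT.steinerVerts v A ⊂ hT.steinerVerts v B) : steinerDist G A < steinerDist G B := by
  have := Set.ncard_lt_ncard h
  have := hT.steinerDist_add_one hA
  have := hT.steinerDist_add_one hB
  omega

theorem steinerVerts_ssubset_of_mem_steinerVerts_erase [DecidableEq V] {w u : V} (hwA : w ∈ A)
    (hw : w ∈ hT.steinerVerts v (A.erase w)) (hu : IsLeaf G u) (huv : u ≠ v) (huA : u ∉ A) :
    hT.steinerVerts v A ⊂ hT.steinerVerts v (insert u (A.erase w)) := by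
  have hA : hT.steinerVerts v A = hT.steinerVerts v (A.erase w) := by
    rw [← hT.steinerVerts_insert_of_mem hw, Finset.insert_erase hwA]
  refine (Set.ssubset_iff_of_subset ?_).2
    ⟨u, hT.subset_steinerVerts (Finset.mem_insert_self _ _), hT.notMem_steinerVerts hu huv huA⟩
  rw [hA]
  exact hT.steinerVerts_mono (Finset.subset_insert _ _)

theorem exists_steinerVerts_ssubset_of_notMem_steinerVerts_erase [DecidableEq V] {w : V}
    (hwA : w ∈ A) (hw : w ∉ hT.steinerVerts v (A.erase w)) (hwv : w ≠ v)
    (hwl : ¬IsLeaf G w) :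
    ∃ b ∉ A, hT.steinerVerts v A ⊂ hT.steinerVerts v (insert b (A.erase w)) := by
  obtain ⟨b, hwb, hb⟩ := hT.exists_adj_notMem_support_path hwv hwl
  have hwb' : w ∈ (hT.path v b).support :=
    hT.isAcyclic.mem_support_of_ne_mem_support_of_adj_of_isPath (hT.isPath_path v b)
      (hT.isPath_path v w) hwb.symm hb
  have hthrough : ∀ a ∈ A, w ∈ (hT.path v a).support → a = w := fun a ha hwa =>
    by_contra fun haw => hw ⟨a, Finset.mem_erase.2 ⟨haw, ha⟩, hwa⟩
  have hsub : hT.steinerVerts v A ⊆ hT.steinerVerts v (insert b (A.erase w)) := by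
    rintro x ⟨a, ha, hx⟩
    by_cases haw : a = w
    · subst haw
      exact ⟨b, Finset.mem_insert_self _ _, hT.support_path_subset hwb' hx⟩
    · exact ⟨a, Finset.mem_insert_of_mem (Finset.mem_erase.2 ⟨haw, ha⟩), hx⟩
  refine ⟨b, fun hbA => hwb.ne (hthrough b hbA hwb').symm, (Set.ssubset_iff_of_subset hsub).2
    ⟨b, hT.subset_steinerVerts (Finset.mem_insert_self _ _), ?_⟩⟩
  rintro ⟨a, ha, hba⟩
  obtain rfl := hthrough a ha (hT.support_path_subset hba hwb')
  exact hb hba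

end SimpleGraph.IsTree

theorem kEccSet_contains_all_leaves_general {V : Type} [Fintype V] (G : SimpleGraph V)
    (hT : G.IsTree) (v : V) (k : ℕ)
    (hcase : numLeaves G < k ∨ (IsLeaf G v ∧ k = numLeaves G))
    (S : Finset V) (hvS : v ∈ S) (hcard : S.card = k)
    (hecc : steinerDist G ↑S = steinerEcc G k v) :
    ∀ u : V, IsLeaf G u → u ∈ S := by
  classical
  intro u hu
  by_contra huS
  have hL : numLeaves G = {x | IsLeaf G x}.toFinset.card := Set.ncard_eq_toFinset_card' _
  obtain ⟨w, hwS, hwv, hwl⟩ := Finset.exists_mem_ne_notMem_of_card hvS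
    (Set.mem_toFinset.2 hu) huS <| by
      rw [hcard, ← hL]
      exact hcase.imp_right fun h => ⟨Set.mem_toFinset.2 h.1, h.2⟩
  obtain ⟨x, hxS, hlt⟩ :
      ∃ x ∉ S, hT.steinerVerts v S ⊂ hT.steinerVerts v (insert x (S.erase w)) := by
    by_cases hw : w ∈ hT.steinerVerts v (S.erase w)
    · exact ⟨u, huS, hT.steinerVerts_ssubset_of_mem_steinerVerts_erase hwS hw hu
        (fun h => huS (h ▸ hvS)) huS⟩
    · exact hT.exists_steinerVerts_ssubset_of_notMem_steinerVerts_erase hwS hw hwv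
        fun h => hwl (Set.mem_toFinset.2 h)
  have hvS' : v ∈ insert x (S.erase w) :=
    Finset.mem_insert_of_mem (Finset.mem_erase.2 ⟨hwv.symm, hvS⟩)
  have hcard' : (insert x (S.erase w)).card = k := by
    rw [Finset.card_insert_of_notMem (fun h => hxS (Finset.mem_of_mem_erase h)),
      Finset.card_erase_add_one hwS, hcard]
  have hle : steinerDist G ↑(insert x (S.erase w)) ≤ steinerDist G ↑S :=
    hecc ▸ steinerDist_le_steinerEcc G hvS' hcard'
  exact (hT.steinerDist_lt_steinerDist hvS hvS' hlt).not_ge hle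

/-- Lemma 2.4: let `T` be a tree and `v ∈ V(T)`. If `k > ℓ(T)`, or if `v` is a leaf and
`k = ℓ(T)`, then every Steiner `k`-ecc `v`-set contains all the leaves of `T`. -/
theorem kEccSet_contains_all_leaves {V : Type} [Fintype V] (G : SimpleGraph V)
    (hT : G.IsTree) (v : V) (k : ℕ) (hk : 2 ≤ k)
    (hcase : numLeaves G < k ∨ (IsLeaf G v ∧ k = numLeaves G))
    (S : Finset V) (hvS : v ∈ S) (hcard : S.card = k)
    (hecc : steinerDist G ↑S = steinerEcc G k v) :
    ∀ u : V, IsLeaf G u → u ∈ S :=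
  kEccSet_contains_all_leaves_general G hT v k hcase S hvS hcard hecc
end

section
/- Let T be a tree, v ∈ V(T), and k an integer with 2 ≤ k ≤ ℓ(T). If S is a Steiner k-ecc v-set, then every vertex of S \ {v} is a leaf of T. -/
/-!
In a tree, the Steiner tree of a set `S ∋ v` is the union of the paths from `v` to the vertices
of `S`, so `d(S) + 1` is the number of vertices on these paths. Suppose `u ∈ S \ {v}` is not a
leaf. A leaf lying on one of these paths must be an endpoint, i.e. `v` or a terminal. If `u` lies
on the path to another terminal, dropping `u` keeps the union, which then contains at most
`k - 1 < ℓ(T)` leaves, so some leaf `w` lies outside it. Otherwise extend the path from `v` to `u`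
beyond `u` up to a leaf `w`. In both cases `(S \ {u}) ∪ {w}` has a strictly larger union of paths,
contradicting the maximality of `d(S)`.
-/

open SimpleGraph

namespace SimpleGraph

variable {V : Type} {G : SimpleGraph V}

lemma isLeaf_iff_exists_neighborSet_eq_singleton {x : V} :
    IsLeaf G x ↔ ∃ y, G.neighborSet x = {y} :=
  Set.ncard_eq_one

lemma IsLeaf.eq_of_adj_of_adj {x a b : V} (hx : IsLeaf G x) (ha : G.Adj x a)
    (hb : G.Adj x b) : a = b := by
  obtain ⟨y, hy⟩ := isLeaf_iff_exists_neighborSet_eq_singleton.mp hx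
  have ha' : a ∈ G.neighborSet x := ha
  have hb' : b ∈ G.neighborSet x := hb
  rw [hy] at ha' hb'
  exact ha'.trans hb'.symm

lemma exists_adj_ne_of_not_isLeaf {x : V} (hx : ¬ IsLeaf G x) {a : V} (ha : G.Adj x a) :
    ∃ b, G.Adj x b ∧ b ≠ a := by
  by_contra! h
  exact hx <| isLeaf_iff_exists_neighborSet_eq_singleton.mpr
    ⟨a, Set.eq_singleton_iff_unique_mem.mpr ⟨ha, h⟩⟩

lemma Walk.IsPath.eq_or_eq_of_isLeaf {u v x : V} {p : G.Walk u v} (hp : p.IsPath)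
    (hx : x ∈ p.support) (hleaf : IsLeaf G x) : x = u ∨ x = v := by
  by_contra! hne
  obtain ⟨q, r, -, -, rfl⟩ := hp.mem_support_iff_exists_append.mp hx
  have hq : ¬ q.Nil := Walk.not_nil_of_ne hne.1.symm
  have hr : ¬ r.Nil := Walk.not_nil_of_ne hne.2
  have hdisj := hp.disjoint_support_of_append hr
  have hsnd : r.snd ∈ q.support :=
    hleaf.eq_of_adj_of_adj (q.adj_penultimate hq).symm (r.adj_snd hr) ▸ q.getVert_mem_support _
  exact hdisj hsnd r.tail.start_mem_support

lemma IsAcyclic.exists_adj_notMem_support (hG : G.IsAcyclic) {v x : V} {p : G.Walk v x}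
    (hp : p.IsPath) (hnil : ¬ p.Nil) (hx : ¬ IsLeaf G x) :
    ∃ y, G.Adj x y ∧ y ∉ p.support := by
  obtain ⟨y, hxy, hy⟩ := exists_adj_ne_of_not_isLeaf hx (p.adj_penultimate hnil).symm
  exact ⟨y, hxy, fun hmem => hy (hG.eq_penultimate_of_adj_end hp hxy hmem)⟩

lemma IsAcyclic.exists_isPath_append_isLeaf [Fintype V] (hG : G.IsAcyclic) {v x : V}
    (p : G.Walk v x) (hp : p.IsPath) (hnil : ¬ p.Nil) :
    ∃ w, ∃ r : G.Walk x w, (p.append r).IsPath ∧ IsLeaf G w := by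
  by_cases hx : IsLeaf G x
  · exact ⟨x, .nil, by rwa [Walk.append_nil], hx⟩
  obtain ⟨y, hxy, hy⟩ := hG.exists_adj_notMem_support hp hnil hx
  have hpy : (p.concat hxy).IsPath := hp.concat hy hxy
  have : Fintype.card V - (p.concat hxy).length < Fintype.card V - p.length := by
    have := hpy.length_lt
    rw [Walk.length_concat] at this ⊢
    omega
  obtain ⟨w, r, hr, hw⟩ := hG.exists_isPath_append_isLeaf _ hpy
    (by simp [Walk.not_nil_iff_lt_length])
  exact ⟨w, .cons hxy r, by rwa [← Walk.concat_append], hw⟩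
termination_by Fintype.card V - p.length

lemma IsAcyclic.support_subset_verts (hG : G.IsAcyclic) {H : G.Subgraph} (hH : H.Connected)
    {a b : V} (ha : a ∈ H.verts) (hb : b ∈ H.verts) {p : G.Walk a b} (hp : p.IsPath) :
    {x | x ∈ p.support} ⊆ H.verts := by
  classical
  obtain ⟨q⟩ := hH ⟨a, ha⟩ ⟨b, hb⟩
  have hq : (q.toPath.1.map H.hom).IsPath := q.toPath.2.map Subgraph.hom_injective
  obtain rfl : p = q.toPath.1.map H.hom :=
    congrArg Subtype.val ((hG.subsingleton_path a b).elim ⟨p, hp⟩ ⟨_, hq⟩)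
  intro x hx
  obtain ⟨y, -, rfl⟩ := List.mem_map.mp ((Walk.support_map _ _) ▸ hx)
  exact y.2

lemma IsAcyclic.ncard_verts_eq_ncard_edgeSet_add_one [Finite V] (hG : G.IsAcyclic)
    {H : G.Subgraph} (hH : H.Connected) : H.verts.ncard = H.edgeSet.ncard + 1 := by
  have hcard := (isTree_iff_connected_and_card.mp ⟨hH.coe, hG.subgraph H⟩).2
  rw [← H.image_coe_edgeSet_coe, Set.ncard_image_of_injective _
    (Sym2.map.injective Subtype.val_injective), ← Nat.card_coe_set_eq,
    ← Nat.card_coe_set_eq, hcard]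

/-- The vertices on paths from `v` to `T`; when `G` is a tree and `v ∈ T`, this is the vertex set
of the Steiner tree of `T`. -/
def pathHull (G : SimpleGraph V) (v : V) (T : Set V) : Set V :=
  {y | ∃ s ∈ T, ∃ p : G.Walk v s, p.IsPath ∧ y ∈ p.support}

section pathHull

variable {v : V} {T : Set V}

lemma pathHull_mono {T' : Set V} (h : T ⊆ T') : G.pathHull v T ⊆ G.pathHull v T' :=
  fun _ ⟨s, hs, hp⟩ => ⟨s, h hs, hp⟩

lemma Connected.subset_pathHull (hG : G.Connected) : T ⊆ G.pathHull v T := by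
  classical
  intro s hs
  obtain ⟨p⟩ := hG.preconnected v s
  exact ⟨s, hs, p.toPath, p.toPath.2, Walk.end_mem_support _⟩

lemma eq_or_mem_of_isLeaf_of_mem_pathHull {x : V} (hx : IsLeaf G x)
    (hxT : x ∈ G.pathHull v T) : x = v ∨ x ∈ T := by
  obtain ⟨s, hs, p, hp, hxp⟩ := hxT
  rcases hp.eq_or_eq_of_isLeaf hxp hx with rfl | rfl
  exacts [.inl rfl, .inr hs]

lemma IsAcyclic.pathHull_insert_of_mem (hG : G.IsAcyclic) {u : V} (hu : u ∈ G.pathHull v T) :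
    G.pathHull v (insert u T) = G.pathHull v T := by
  classical
  refine (pathHull_mono (Set.subset_insert u T)).antisymm' ?_
  rintro y ⟨s, rfl | hs, p, hp, hyp⟩
  · obtain ⟨t, ht, q, hq, huq⟩ := hu
    obtain rfl : p = q.takeUntil s huq :=
      congrArg Subtype.val ((hG.subsingleton_path v s).elim ⟨p, hp⟩ ⟨_, hq.takeUntil huq⟩)
    exact ⟨t, ht, q, hq, q.support_takeUntil_subset_support huq hyp⟩
  · exact ⟨s, hs, p, hp, hyp⟩

lemma connected_induce_pathHull (hv : v ∈ T) : (G.induce (G.pathHull v T)).Connected := by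
  refine induce_connected_of_patches v ⟨v, hv, .nil, .nil, Walk.start_mem_support _⟩ ?_
  rintro y ⟨s, hs, p, hp, hyp⟩
  exact ⟨{x | x ∈ p.support}, fun x hx => ⟨s, hs, p, hp, hx⟩, p.start_mem_support, hyp,
    p.connected_induce_support.preconnected _ _⟩

lemma IsAcyclic.pathHull_subset_verts (hG : G.IsAcyclic) {H : G.Subgraph} (hH : H.Connected)
    (hv : v ∈ H.verts) (hT : T ⊆ H.verts) : G.pathHull v T ⊆ H.verts := by
  rintro y ⟨s, hs, p, hp, hyp⟩
  exact hG.support_subset_verts hH hv (hT hs) hp hyp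

end pathHull

lemma IsTree.steinerDist_add_one_eq_ncard_pathHull [Fintype V] (hG : G.IsTree) {v : V}
    {T : Set V} (hv : v ∈ T) : steinerDist G T + 1 = (G.pathHull v T).ncard := by
  set hull := (⊤ : G.Subgraph).induce (G.pathHull v T)
  have hhull : hull.Connected := connected_induce_iff.mp (connected_induce_pathHull hv)
  have hhull_verts : hull.verts = G.pathHull v T := rfl
  refine le_antisymm ?_ ?_
  · calc steinerDist G T + 1 ≤ hull.edgeSet.ncard + 1 := by
          gcongr
          exact Nat.sInf_le ⟨hull, hhull, hG.connected.subset_pathHull, rfl⟩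
      _ = (G.pathHull v T).ncard := by
          rw [← hhull_verts, hG.isAcyclic.ncard_verts_eq_ncard_edgeSet_add_one hhull]
  · obtain ⟨H, hH, hTH, hHcard⟩ : steinerDist G T ∈
        {n | ∃ H : G.Subgraph, H.Connected ∧ T ⊆ H.verts ∧ H.edgeSet.ncard = n} :=
      Nat.sInf_mem ⟨_, hull, hhull, hG.connected.subset_pathHull, rfl⟩
    calc (G.pathHull v T).ncard ≤ H.verts.ncard :=
          Set.ncard_le_ncard (hG.isAcyclic.pathHull_subset_verts hH (hTH hv) hTH)
      _ = steinerDist G T + 1 := by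
          rw [hG.isAcyclic.ncard_verts_eq_ncard_edgeSet_add_one hH, hHcard]

lemma IsTree.steinerDist_le_steinerEcc [Fintype V] (hG : G.IsTree) {k : ℕ} {v : V}
    {S : Finset V} (hv : v ∈ S) (hS : S.card = k) : steinerDist G S ≤ steinerEcc G k v := by
  refine le_csSup ⟨Nat.card V, ?_⟩ ⟨S, hv, hS, rfl⟩
  rintro _ ⟨T, hvT, -, rfl⟩
  have := hG.steinerDist_add_one_eq_ncard_pathHull (T := T) hvT
  have := Set.ncard_le_card (G.pathHull v T)
  omega

lemma exists_isLeaf_notMem_pathHull [Fintype V] {v : V} {T : Finset V} (hv : v ∈ T)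
    (hT : T.card < numLeaves G) : ∃ w, IsLeaf G w ∧ w ∉ G.pathHull v T := by
  by_contra! h
  have hleaves : {x | IsLeaf G x} ⊆ (T : Set V) := fun x hx => by
    rcases eq_or_mem_of_isLeaf_of_mem_pathHull hx (h x hx) with rfl | hxT
    exacts [hv, hxT]
  have := Set.ncard_le_ncard hleaves
  rw [Set.ncard_coe_finset] at this
  exact (this.trans_lt hT).false

lemma IsTree.exists_notMem_pathHull_insert [Fintype V] (hG : G.IsTree) {v u : V} {T : Set V}
    (huv : u ≠ v) (hu : ¬ IsLeaf G u) (huT : u ∉ G.pathHull v T) :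
    ∃ w, w ∉ G.pathHull v (insert u T) ∧ u ∈ G.pathHull v {w} := by
  classical
  obtain ⟨p⟩ := hG.connected.preconnected v u
  obtain ⟨p, hp⟩ := p.toPath
  obtain ⟨y, huy, hy⟩ :=
    hG.isAcyclic.exists_adj_notMem_support hp (Walk.not_nil_of_ne huv.symm) hu
  obtain ⟨w, r, hr, hw⟩ := hG.isAcyclic.exists_isPath_append_isLeaf (p.concat huy)
    (hp.concat hy huy) (by simp [Walk.not_nil_iff_lt_length])
  rw [Walk.concat_append] at hr
  have hwp : w ∉ p.support := fun h =>
    hr.disjoint_support_of_append Walk.not_nil_cons h (by simp)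
  have hup : u ∈ (p.append (.cons huy r)).support :=
    p.support_subset_support_append_left _ p.end_mem_support
  refine ⟨w, fun hwT => ?_, w, rfl, _, hr, hup⟩
  rcases eq_or_mem_of_isLeaf_of_mem_pathHull hw hwT with rfl | rfl | hwT
  · exact hwp p.start_mem_support
  · exact hwp p.end_mem_support
  · exact huT ⟨w, hwT, _, hr, hup⟩

lemma IsTree.exists_pathHull_insert_ssubset [Fintype V] (hG : G.IsTree) {v u : V}
    {T : Finset V} (hv : v ∈ T) (hu : ¬ IsLeaf G u) (hT : T.card < numLeaves G) :
    ∃ w ∉ insert u (T : Set V), G.pathHull v (insert u T) ⊂ G.pathHull v (insert w T) := by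
  suffices h : ∃ w, w ∉ G.pathHull v (insert u T) ∧ u ∈ G.pathHull v (insert w T) by
    obtain ⟨w, hw, huw⟩ := h
    have hsub : G.pathHull v (insert u T) ⊆ G.pathHull v (insert w T) :=
      calc G.pathHull v (insert u T) ⊆ G.pathHull v (insert u (insert w T)) :=
            pathHull_mono (Set.insert_subset_insert (Set.subset_insert w _))
        _ = G.pathHull v (insert w T) := hG.isAcyclic.pathHull_insert_of_mem huw
    refine ⟨w, fun h => hw (hG.connected.subset_pathHull h), hsub.ssubset_of_not_subset ?_⟩
    exact fun h => hw (h (hG.connected.subset_pathHull (Set.mem_insert w _)))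
  by_cases huT : u ∈ G.pathHull v T
  · obtain ⟨w, -, hw⟩ := exists_isLeaf_notMem_pathHull hv hT
    exact ⟨w, by rwa [hG.isAcyclic.pathHull_insert_of_mem huT],
      pathHull_mono (Set.subset_insert w _) huT⟩
  · have huv : u ≠ v := fun h => huT (hG.connected.subset_pathHull (h ▸ hv))
    obtain ⟨w, hw, huw⟩ := hG.exists_notMem_pathHull_insert huv hu huT
    exact ⟨w, hw, pathHull_mono (Set.singleton_subset_iff.mpr (Set.mem_insert w _)) huw⟩

end SimpleGraph

theorem kEccSet_terminals_are_leaves_general {V : Type} [Fintype V] (G : SimpleGraph V)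
    (hT : G.IsTree) (v : V) (k : ℕ) (hkl : k ≤ numLeaves G)
    (S : Finset V) (hvS : v ∈ S) (hcard : S.card = k)
    (hecc : steinerDist G ↑S = steinerEcc G k v) :
    ∀ u ∈ S, u ≠ v → IsLeaf G u := by
  classical
  intro u huS huv
  by_contra hu
  have hvT : v ∈ S.erase u := Finset.mem_erase.mpr ⟨huv.symm, hvS⟩
  obtain ⟨w, hw, hssub⟩ := hT.exists_pathHull_insert_ssubset hvT hu
    ((Finset.card_erase_lt_of_mem huS).trans_le (hcard ▸ hkl))
  rw [← Finset.coe_insert, Finset.insert_erase huS, ← Finset.coe_insert] at hssub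
  have hvS' : v ∈ insert w (S.erase u) := Finset.mem_insert_of_mem hvT
  have hcard' : (insert w (S.erase u)).card = k := by
    rw [Finset.card_insert_of_notMem fun h => hw (Set.mem_insert_of_mem _ h),
      Finset.card_erase_add_one huS, hcard]
  have hlt : steinerDist G ↑S + 1 < steinerDist G ↑(insert w (S.erase u)) + 1 := by
    rw [hT.steinerDist_add_one_eq_ncard_pathHull hvS,
      hT.steinerDist_add_one_eq_ncard_pathHull hvS']
    exact Set.ncard_lt_ncard hssub
  have := hT.steinerDist_le_steinerEcc hvS' hcard'
  omega

/-- Lemma 2.5: let `T` be a tree, `v ∈ V(T)`, and `2 ≤ k ≤ ℓ(T)`. If `S` is a Steiner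
`k`-ecc `v`-set, then every vertex of `S \ {v}` is a leaf of `T`. -/
theorem kEccSet_terminals_are_leaves {V : Type} [Fintype V] (G : SimpleGraph V)
    (hT : G.IsTree) (v : V) (k : ℕ) (hk2 : 2 ≤ k) (hkl : k ≤ numLeaves G)
    (S : Finset V) (hvS : v ∈ S) (hcard : S.card = k)
    (hecc : steinerDist G ↑S = steinerEcc G k v) :
    ∀ u ∈ S, u ≠ v → IsLeaf G u :=
  kEccSet_terminals_are_leaves_general G hT v k hkl S hvS hcard hecc
end

section
/- Let v be a vertex of a tree T, and let P_1 and P_2 be two (possibly distinct) longest paths of T having v as an endpoint (each of length ecc_2(v,T)). Then ecc_T(P_1) = ecc_T(P_2). -/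
open SimpleGraph

/-- The standard eccentricity `ecc_2(v, G)`: the maximum distance from `v` to a vertex. -/
noncomputable def ecc2 {V : Type} [Fintype V] (G : SimpleGraph V) (v : V) : ℕ :=
  Finset.univ.sup (fun u => G.dist v u)

/-- The distance from a vertex `u` to a set `A` of vertices. -/
noncomputable def distToSet {V : Type} (G : SimpleGraph V) (u : V) (A : Set V) : ℕ :=
  sInf ((G.dist u) '' A)

/-- The eccentricity of a set `A` of vertices (e.g. of a subgraph such as a path):
the maximum over all vertices `u` of the distance from `u` to `A`. -/
noncomputable def eccOfSet {V : Type} [Fintype V] (G : SimpleGraph V) (A : Set V) : ℕ :=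
  Finset.univ.sup (fun u => distToSet G u A)

/-!
In a tree, the distance from `u` to a path `[a, b]` is the Gromov product
`(d(u,a) + d(u,b) - d(a,b)) / 2`, attained at the gate of `u` on the path, and tree metrics
satisfy the four-point condition. Writing `D = d(v, b₁)` with `b₁` a farthest vertex from `v`,
the four-point condition for `u, b₁, v, b₂` bounds `d(u, P₁)` either by `d(u, P₂)` or, using
`d(v, u) ≤ D`, by `d(b₁, P₂)`. Hence `ecc(P₁) ≤ ecc(P₂)`, and symmetrically.
-/

namespace SimpleGraph

open Walk

variable {V : Type} {G : SimpleGraph V}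

lemma IsTree.length_eq_dist (hT : G.IsTree) {a b : V} {p : G.Walk a b} (hp : p.IsPath) :
    p.length = G.dist a b := by
  obtain ⟨q, hq, hql⟩ := hT.connected.exists_path_of_dist a b
  rw [(hT.existsUnique_path a b).unique hp hq, hql]

lemma IsTree.dist_add_dist_of_mem_support (hT : G.IsTree) {a b w : V} {p : G.Walk a b}
    (hp : p.IsPath) (hw : w ∈ p.support) : G.dist a w + G.dist w b = G.dist a b := by
  classical
  rw [← hT.length_eq_dist hp, ← hT.length_eq_dist (hp.takeUntil hw),
    ← hT.length_eq_dist (hp.dropUntil hw), ← length_append, take_spec]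

lemma IsTree.dist_add_dist_eq_or_of_mem_support (hT : G.IsTree) {a b w₁ w₂ : V}
    {p : G.Walk a b} (hp : p.IsPath) (h₁ : w₁ ∈ p.support) (h₂ : w₂ ∈ p.support) :
    G.dist a w₁ + G.dist w₁ w₂ = G.dist a w₂ ∨ G.dist a w₂ + G.dist w₂ w₁ = G.dist a w₁ := by
  classical
  rw [← take_spec p h₁, mem_support_append_iff] at h₂
  rcases h₂ with h₂ | h₂
  · exact Or.inr (hT.dist_add_dist_of_mem_support (hp.takeUntil h₁) h₂)
  · have := hT.dist_add_dist_of_mem_support (hp.dropUntil h₁) h₂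
    have := hT.dist_add_dist_of_mem_support hp h₁
    have := hT.dist_add_dist_of_mem_support hp (p.support_dropUntil_subset_support h₁ h₂)
    omega

lemma Walk.IsPath.append {u m b : V} {q : G.Walk u m} {r : G.Walk m b} (hq : q.IsPath)
    (hr : r.IsPath) (h : ∀ w ∈ q.support, w ∈ r.support → w = m) : (q.append r).IsPath := by
  rw [isPath_def, support_append]
  refine hq.support_nodup.append hr.support_nodup.tail fun w hwq hwr => ?_
  obtain rfl := h w hwq (List.mem_of_mem_tail hwr)
  have hnd := hr.support_nodup
  rw [← r.cons_tail_support] at hnd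
  exact (List.nodup_cons.mp hnd).1 hwr

lemma exists_mem_dist_eq_distToSet {u : V} {A : Set V} (hA : A.Nonempty) :
    ∃ m ∈ A, G.dist u m = distToSet G u A ∧ ∀ w ∈ A, G.dist u m ≤ G.dist u w := by
  obtain ⟨m, hm, hmA⟩ := Nat.sInf_mem (hA.image (G.dist u))
  exact ⟨m, hm, hmA, fun w hw => hmA ▸ Nat.sInf_le (Set.mem_image_of_mem _ hw)⟩

/-- A shortest path from `u` to a nearest vertex `m` of `p` meets `p` only at `m`, so it
extends along `p` to a path, i.e. a geodesic, from `u` to `b`. -/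
lemma IsTree.dist_eq_add_of_isNearest (hT : G.IsTree) {a b u m : V} {p : G.Walk a b}
    (hp : p.IsPath) (hm : m ∈ p.support) (hmin : ∀ w ∈ p.support, G.dist u m ≤ G.dist u w) :
    G.dist u b = G.dist u m + G.dist m b := by
  classical
  obtain ⟨q, hq, hql⟩ := hT.connected.exists_path_of_dist u m
  have hqr : (q.append (p.dropUntil m hm)).IsPath := by
    refine hq.append (hp.dropUntil hm) fun w hwq hwr => ?_
    have := hT.dist_add_dist_of_mem_support hq hwq
    have := hmin w (p.support_dropUntil_subset_support hm hwr)
    exact hT.connected.dist_eq_zero_iff.mp (by omega)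
  rw [← hT.length_eq_dist hqr, length_append, hql, hT.length_eq_dist (hp.dropUntil hm)]

lemma IsTree.exists_gate (hT : G.IsTree) {a b : V} {p : G.Walk a b} (hp : p.IsPath) (u : V) :
    ∃ m ∈ p.support, G.dist u m = distToSet G u {z | z ∈ p.support} ∧
      G.dist u a = G.dist u m + G.dist m a ∧ G.dist u b = G.dist u m + G.dist m b := by
  obtain ⟨m, hm, hmd, hmin⟩ :=
    exists_mem_dist_eq_distToSet (G := G) (u := u) (A := {z | z ∈ p.support})
      ⟨a, p.start_mem_support⟩
  refine ⟨m, hm, hmd, ?_, hT.dist_eq_add_of_isNearest hp hm hmin⟩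
  exact hT.dist_eq_add_of_isNearest hp.reverse (by simpa using hm) (by simpa using hmin)

lemma IsTree.two_mul_distToSet_add_dist (hT : G.IsTree) {a b : V} {p : G.Walk a b}
    (hp : p.IsPath) (u : V) :
    2 * distToSet G u {z | z ∈ p.support} + G.dist a b = G.dist u a + G.dist u b := by
  obtain ⟨m, hm, hmd, hma, hmb⟩ := hT.exists_gate hp u
  have := hT.dist_add_dist_of_mem_support hp hm
  have : G.dist m a = G.dist a m := dist_comm
  omega

lemma IsTree.dist_add_dist_le_max (hT : G.IsTree) (u x a b : V) :
    G.dist u x + G.dist a b ≤ max (G.dist u b + G.dist a x) (G.dist u a + G.dist x b) := by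
  obtain ⟨p, hp, -⟩ := hT.connected.exists_path_of_dist a b
  obtain ⟨g, hg, -, hga, hgb⟩ := hT.exists_gate hp u
  obtain ⟨h, hh, -, hha, hhb⟩ := hT.exists_gate hp x
  have hg_split := hT.dist_add_dist_of_mem_support hp hg
  have hh_split := hT.dist_add_dist_of_mem_support hp hh
  have hux := hT.connected.dist_triangle (u := u) (v := g) (w := x)
  have hgx := hT.connected.dist_triangle (u := g) (v := h) (w := x)
  have : G.dist g a = G.dist a g := dist_comm
  have : G.dist h a = G.dist a h := dist_comm
  have : G.dist h g = G.dist g h := dist_comm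
  have : G.dist h x = G.dist x h := dist_comm
  have : G.dist a x = G.dist x a := dist_comm
  rcases hT.dist_add_dist_eq_or_of_mem_support hp hg hh with hgh | hhg
  · exact le_max_of_le_left (by omega)
  · exact le_max_of_le_right (by omega)

variable [Fintype V]

lemma distToSet_le_eccOfSet (G : SimpleGraph V) (u : V) (A : Set V) :
    distToSet G u A ≤ eccOfSet G A :=
  Finset.le_sup (f := fun u => distToSet G u A) (Finset.mem_univ u)

lemma dist_le_ecc2 (G : SimpleGraph V) (v u : V) : G.dist v u ≤ ecc2 G v :=
  Finset.le_sup (f := G.dist v) (Finset.mem_univ u)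

lemma IsTree.eccOfSet_support_le (hT : G.IsTree) {v b₁ b₂ : V} {P₁ : G.Walk v b₁}
    (hP₁ : P₁.IsPath) {P₂ : G.Walk v b₂} (hP₂ : P₂.IsPath) (hfar : ∀ u, G.dist v u ≤ G.dist v b₁) :
    eccOfSet G {z | z ∈ P₁.support} ≤ eccOfSet G {z | z ∈ P₂.support} := by
  refine Finset.sup_le fun u _ => ?_
  have hu₁ := hT.two_mul_distToSet_add_dist hP₁ u
  have hu₂ := hT.two_mul_distToSet_add_dist hP₂ u
  have hb₁ := hT.two_mul_distToSet_add_dist hP₂ b₁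
  have hu_le := distToSet_le_eccOfSet G u {z | z ∈ P₂.support}
  have hb₁_le := distToSet_le_eccOfSet G b₁ {z | z ∈ P₂.support}
  have hvu := hfar u
  have : G.dist u v = G.dist v u := dist_comm
  have : G.dist b₁ v = G.dist v b₁ := dist_comm
  rcases le_max_iff.mp (hT.dist_add_dist_le_max u b₁ v b₂) with h | h <;> omega

end SimpleGraph

/-- Lemma 2.8: let `v` be a vertex of a tree `T`, and let `P₁` and `P₂` be longest paths of
`T` having `v` as an endpoint. Then `ecc_T(P₁) = ecc_T(P₂)`. -/
theorem ecc_eq_for_longest_paths {V : Type} [Fintype V] (G : SimpleGraph V)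
    (hT : G.IsTree) (v b₁ b₂ : V)
    (P₁ : G.Walk v b₁) (hP₁ : P₁.IsPath) (hP₁len : P₁.length = ecc2 G v)
    (P₂ : G.Walk v b₂) (hP₂ : P₂.IsPath) (hP₂len : P₂.length = ecc2 G v) :
    eccOfSet G {z | z ∈ P₁.support} = eccOfSet G {z | z ∈ P₂.support} := by
  have hfar₁ : ∀ u, G.dist v u ≤ G.dist v b₁ := fun u =>
    hT.length_eq_dist hP₁ ▸ hP₁len ▸ dist_le_ecc2 G v u
  have hfar₂ : ∀ u, G.dist v u ≤ G.dist v b₂ := fun u =>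
    hT.length_eq_dist hP₂ ▸ hP₂len ▸ dist_le_ecc2 G v u
  exact le_antisymm (hT.eccOfSet_support_le hP₁ hP₂ hfar₁) (hT.eccOfSet_support_le hP₂ hP₁ hfar₂)
end
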